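/- arXiv:1803.06156 — 2 statements merged into one kernel-verified Lean document; each statement's English description precedes it below -/
import Mathlib

section
/- Suppose for data f ∈ ℝ^N there exists a partition 𝓘' and ε > 0 with 𝓖_{𝓘'}(f) < 𝓖_𝓘(f) - ε for all partitions 𝓘 not equivalent to 𝓘'. Then with δ = min( ε / (2(2β)^{2k}(‖f‖ + 1/2)), 1/2 ), for every g with ‖g - f‖ < δ the higher order Mumford-Shah problem for data g has a unique minimizer and its optimal partition is equivalent to 𝓘'. -/
open Finset Matrix

/-- `diffEnergy k q v = ‖∇ᵏ v‖₂²`, where `∇ᵏ` is the k-th order finite difference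
operator whose rows are shifts of the k-fold convolution of `(-1, 1)` with itself;
it is the empty map (energy `0`) when `q ≤ k`. -/
noncomputable def diffEnergy (k q : ℕ) (v : Fin q → ℝ) : ℝ :=
  ∑ i : Fin (q - k), (∑ j : Fin (k + 1),
    (-1 : ℝ) ^ (k - j.val) * (Nat.choose k j.val : ℝ) *
      v ⟨i.val + j.val, by have hi := i.isLt; have hj := j.isLt; omega⟩) ^ 2

/-- The k-th order smoothing spline approximation error
`E = min_v ‖v - g‖₂² + β^{2k} ‖∇ᵏ v‖₂²` for data `g` on an interval of length `q`. -/
noncomputable def splineError (k : ℕ) (β : ℝ) {q : ℕ} (g : Fin q → ℝ) : ℝ :=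
  ⨅ v : Fin q → ℝ, (∑ i, (v i - g i) ^ 2) + β ^ (2 * k) * diffEnergy k q v

/-- A partition of `{1,...,N}` into consecutive discrete intervals, encoded by its
boundaries `0 = b 0 < b 1 < ... < b M = N`; the m-th segment consists of the
(0-indexed) indices `b m, ..., b (m+1) - 1`, and `M` is the number of segments. -/
structure IPart (N : ℕ) where
  M : ℕ
  b : Fin (M + 1) → ℕ
  mono : StrictMono b
  first : b 0 = 0
  last : b (Fin.last M) = N

/-- Length of the `m`-th segment of the partition. -/
def IPart.len {N : ℕ} (P : IPart N) (m : Fin P.M) : ℕ :=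
  P.b m.succ - P.b m.castSucc

theorem IPart.idx_lt {N : ℕ} (P : IPart N) (m : Fin P.M) (i : Fin (P.len m)) :
    P.b m.castSucc + i.val < N := by
  have h1 : i.val < P.b m.succ - P.b m.castSucc := i.isLt
  have h2 : P.b m.succ ≤ N := by
    have h := P.mono.monotone (Fin.le_last m.succ)
    rwa [P.last] at h
  omega

/-- Restriction `f_I` of a signal `f` to the `m`-th segment `I` of the partition. -/
def IPart.restrict {N : ℕ} (P : IPart N) (f : Fin N → ℝ) (m : Fin P.M) :
    Fin (P.len m) → ℝ :=
  fun i => f ⟨P.b m.castSucc + i.val, P.idx_lt m i⟩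

/-- Row index type of the block-diagonal k-th order finite difference matrix `L_𝓘`:
one block of `len - k` rows per segment (an empty block when `len ≤ k`). -/
abbrev IPart.RowIdx {N : ℕ} (P : IPart N) (k : ℕ) : Type :=
  Σ m : Fin P.M, Fin (P.len m - k)

/-- The block-diagonal k-th order finite difference matrix `L_𝓘` of a partition. -/
noncomputable def IPart.L {N : ℕ} (P : IPart N) (k : ℕ) :
    Matrix (P.RowIdx k) (Fin N) ℝ :=
  Matrix.of fun r c => ∑ t ∈ Finset.range (k + 1),
    if (c : ℕ) = P.b r.1.castSucc + r.2.val + t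
    then (-1 : ℝ) ^ (k - t) * (Nat.choose k t : ℝ) else 0

/-- `S_{𝓘,β} = (β^{2k} L_𝓘ᵀ L_𝓘 + id)⁻¹`. -/
noncomputable def Smat {N : ℕ} (P : IPart N) (k : ℕ) (β : ℝ) :
    Matrix (Fin N) (Fin N) ℝ :=
  (β ^ (2 * k) • ((P.L k)ᵀ * P.L k) + 1)⁻¹

/-- Squared Euclidean norm. -/
noncomputable def normSq {ι : Type*} [Fintype ι] (x : ι → ℝ) : ℝ := ∑ i, x i ^ 2

/-- Two partitions are equivalent iff they have the same intervals of length
`> k` (i.e. of minimum length `k + 1`). -/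
def equivk {N : ℕ} (k : ℕ) (P Q : IPart N) : Prop :=
  {p : ℕ × ℕ | ∃ m : Fin P.M, p = (P.b m.castSucc, P.b m.succ) ∧ k < P.len m} =
  {p : ℕ × ℕ | ∃ m : Fin Q.M, p = (Q.b m.castSucc, Q.b m.succ) ∧ k < Q.len m}

/-- `|[𝓘]|`: the minimal number of segments among partitions equivalent to `𝓘`. -/
noncomputable def classCard {N : ℕ} (k : ℕ) (P : IPart N) : ℕ :=
  sInf {M' | ∃ Q : IPart N, equivk k Q P ∧ Q.M = M'}

/-- `𝓖_𝓘(f) = β^{2k}‖L_𝓘 S_𝓘 f‖₂² + ‖S_𝓘 f - f‖₂² + γ|[𝓘]|`, the value of the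
Mumford-Shah functional for data `f` restricted to the equivalence class of `𝓘`. -/
noncomputable def Gc {N : ℕ} (k : ℕ) (β γ : ℝ) (f : Fin N → ℝ) (P : IPart N) : ℝ :=
  β ^ (2 * k) * normSq ((P.L k) *ᵥ (Smat P k β *ᵥ f))
    + normSq (Smat P k β *ᵥ f - f) + γ * classCard k P

/-- The higher order Mumford-Shah functional
`‖u - g‖₂² + β^{2k} Σ_{I∈𝓘}‖∇ᵏ u_I‖₂² + γ|𝓘|`. -/
noncomputable def msF {N : ℕ} (k : ℕ) (β γ : ℝ) (g u : Fin N → ℝ)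
    (P : IPart N) : ℝ :=
  (∑ i, (u i - g i) ^ 2)
    + β ^ (2 * k) * ∑ m : Fin P.M, diffEnergy k (P.len m) (P.restrict u m)
    + γ * P.M

/-!
For a fixed partition the quadratic part of the functional is a smoothing-spline problem. With
`t = β^{2k}` and `S = (t LᵀL + 1)⁻¹`, the energy `‖u - g‖² + t ‖L u‖²` equals its minimum
`g ⬝ᵥ g - g ⬝ᵥ S g` plus `‖u - S g‖² + t ‖L (u - S g)‖²`. Since `LᵀL` only sees the intervals of
length `> k`, `S` and `𝓖` are constant on equivalence classes; hence if one class has strictly the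
smallest value of `𝓖(g)`, the only Mumford-Shah minimizer for `g` is `S g`, attained exactly on the
partitions of that class.

The minimal energy is the quadratic form `g ↦ g ⬝ᵥ (1 - S) g`, with values in
`[0, (2β)^{2k} ‖g‖²]` because `‖L‖² ≤ 4^k`. By polarization, the difference of two such forms
changes by at most `(2β)^{2k} ‖g - f‖ ‖g + f‖ < ε` from `f` to `g`, so the gap `ε` at `f` keeps
`𝓘'` strictly optimal at `g`.
-/

section NormSq

variable {n : Type*} [Fintype n]

lemma normSq_eq_dotProduct (x : n → ℝ) : normSq x = x ⬝ᵥ x := by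
  simp only [normSq, dotProduct, sq]

lemma normSq_nonneg (x : n → ℝ) : 0 ≤ normSq x := by
  unfold normSq
  positivity

lemma normSq_eq_zero {x : n → ℝ} : normSq x = 0 ↔ x = 0 := by
  rw [normSq_eq_dotProduct, dotProduct_self_eq_zero]

lemma normSq_smul (a : ℝ) (x : n → ℝ) : normSq (a • x) = a ^ 2 * normSq x := by
  simp only [normSq, Finset.mul_sum, Pi.smul_apply, smul_eq_mul, mul_pow]

lemma sqrt_normSq_eq_norm (x : n → ℝ) : √(normSq x) = ‖WithLp.toLp 2 x‖ := by
  simp [EuclideanSpace.norm_eq, normSq]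

lemma sqrt_normSq_add_le (x y : n → ℝ) : √(normSq (x + y)) ≤ √(normSq x) + √(normSq y) := by
  simpa only [sqrt_normSq_eq_norm, WithLp.toLp_add] using norm_add_le _ _

lemma normSq_add_add_normSq_sub (x y : n → ℝ) :
    normSq (x + y) + normSq (x - y) = 2 * normSq x + 2 * normSq y := by
  simp only [normSq_eq_dotProduct, add_dotProduct, dotProduct_add, sub_dotProduct,
    dotProduct_sub, dotProduct_comm y x]
  ring

end NormSq

section SymmetricForm

variable {n : Type*} [Fintype n] {D : Matrix n n ℝ}

lemma Matrix.IsSymm.dotProduct_mulVec_comm (hD : D.IsSymm) (x y : n → ℝ) :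
    x ⬝ᵥ D *ᵥ y = y ⬝ᵥ D *ᵥ x := by
  rw [dotProduct_mulVec, ← mulVec_transpose, hD.eq, dotProduct_comm]

lemma Matrix.IsSymm.quadratic_sub_quadratic (hD : D.IsSymm) (x y : n → ℝ) :
    x ⬝ᵥ D *ᵥ x - y ⬝ᵥ D *ᵥ y = (x - y) ⬝ᵥ D *ᵥ (x + y) := by
  have := hD.dotProduct_mulVec_comm x y
  simp only [mulVec_add, sub_dotProduct, dotProduct_add]
  linarith

lemma Matrix.IsSymm.dotProduct_mulVec_le (hD : D.IsSymm) {c : ℝ}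
    (hc : ∀ z, |z ⬝ᵥ D *ᵥ z| ≤ c * normSq z) (x y : n → ℝ) :
    x ⬝ᵥ D *ᵥ y ≤ c * √(normSq x) * √(normSq y) := by
  have two_mul_le : ∀ u v : n → ℝ, 2 * (u ⬝ᵥ D *ᵥ v) ≤ c * (normSq u + normSq v) := by
    intro u v
    have hpol : 4 * (u ⬝ᵥ D *ᵥ v) = (u + v) ⬝ᵥ D *ᵥ (u + v) - (u - v) ⬝ᵥ D *ᵥ (u - v) := by
      have := hD.dotProduct_mulVec_comm u v
      simp only [mulVec_add, mulVec_sub, add_dotProduct, sub_dotProduct, dotProduct_add,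
        dotProduct_sub]
      linarith
    have hplus := (abs_le.mp (hc (u + v))).2
    have hminus := (abs_le.mp (hc (u - v))).1
    have hpar := congrArg (c * ·) (normSq_add_add_normSq_sub u v)
    linarith
  set a := √(normSq x)
  set b := √(normSq y)
  have ha2 : a ^ 2 = normSq x := Real.sq_sqrt (normSq_nonneg x)
  have hb2 : b ^ 2 = normSq y := Real.sq_sqrt (normSq_nonneg y)
  rcases (mul_nonneg (Real.sqrt_nonneg _) (Real.sqrt_nonneg _) : 0 ≤ a * b).eq_or_lt with hab | hab
  · rcases mul_eq_zero.mp hab.symm with h | h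
    · rw [normSq_eq_zero.mp (show normSq x = 0 by rw [← ha2, h]; ring)]
      simp [h]
    · rw [normSq_eq_zero.mp (show normSq y = 0 by rw [← hb2, h]; ring)]
      simp [h]
  · have hscaled := two_mul_le (b • x) (a • y)
    rw [normSq_smul, normSq_smul, ← ha2, ← hb2, mulVec_smul, dotProduct_smul, smul_dotProduct,
      smul_eq_mul, smul_eq_mul] at hscaled
    nlinarith

end SymmetricForm

section SmoothingSpline

variable {m n : Type*} [Fintype m] [Fintype n]

noncomputable def splineEnergy (L : Matrix m n ℝ) (t : ℝ) (g u : n → ℝ) : ℝ :=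
  normSq (u - g) + t * normSq (L *ᵥ u)

variable {L : Matrix m n ℝ} {t : ℝ}

lemma splineEnergy_nonneg (ht : 0 ≤ t) (g u : n → ℝ) : 0 ≤ splineEnergy L t g u :=
  add_nonneg (normSq_nonneg _) (mul_nonneg ht (normSq_nonneg _))

lemma splineEnergy_eq_add_of_normal_eq {g s : n → ℝ} (hs : s + t • (Lᵀ *ᵥ (L *ᵥ s)) = g)
    (u : n → ℝ) :
    splineEnergy L t g u
      = splineEnergy L t g s + normSq (u - s) + t * normSq (L *ᵥ (u - s)) := by
  subst hs
  obtain ⟨d, rfl⟩ : ∃ d, u = s + d := ⟨u - s, by abel⟩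
  have hcross : (L *ᵥ s) ⬝ᵥ (L *ᵥ d) = (Lᵀ *ᵥ (L *ᵥ s)) ⬝ᵥ d := by
    rw [mulVec_transpose, ← dotProduct_mulVec]
  simp only [splineEnergy, normSq_eq_dotProduct, add_sub_cancel_left, mulVec_add,
    add_dotProduct, dotProduct_add, sub_dotProduct, dotProduct_sub, smul_dotProduct,
    dotProduct_smul, smul_eq_mul, dotProduct_comm d, dotProduct_comm (L *ᵥ d),
    dotProduct_comm s (Lᵀ *ᵥ (L *ᵥ s)), hcross]
  ring

lemma splineEnergy_of_normal_eq {g s : n → ℝ} (hs : s + t • (Lᵀ *ᵥ (L *ᵥ s)) = g) :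
    splineEnergy L t g s = g ⬝ᵥ g - g ⬝ᵥ s := by
  subst hs
  have hLs : (L *ᵥ s) ⬝ᵥ (L *ᵥ s) = s ⬝ᵥ (Lᵀ *ᵥ (L *ᵥ s)) := by
    rw [mulVec_transpose, dotProduct_comm s, dotProduct_mulVec]
  simp only [splineEnergy, normSq_eq_dotProduct, sub_add_cancel_left, neg_dotProduct,
    dotProduct_neg, add_dotProduct, dotProduct_add, smul_dotProduct, dotProduct_smul,
    smul_eq_mul, hLs, dotProduct_comm (Lᵀ *ᵥ (L *ᵥ s)) s]
  ring

variable [DecidableEq n]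

noncomputable def smoother (L : Matrix m n ℝ) (t : ℝ) : Matrix n n ℝ :=
  (t • (Lᵀ * L) + 1)⁻¹

lemma posDef_smul_gram_add_one (ht : 0 ≤ t) : (t • (Lᵀ * L) + 1).PosDef := by
  have hgram : (Lᵀ * L).PosSemidef := by
    simpa using posSemidef_conjTranspose_mul_self L
  exact PosDef.posSemidef_add (hgram.smul ht) PosDef.one

lemma smoother_isSymm : (smoother L t).IsSymm := by
  refine IsSymm.inv (IsSymm.add (IsSymm.smul ?_ t) isSymm_one)
  rw [IsSymm, transpose_mul, transpose_transpose]

lemma smoother_mulVec_add (ht : 0 ≤ t) (g : n → ℝ) :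
    smoother L t *ᵥ g + t • (Lᵀ *ᵥ (L *ᵥ (smoother L t *ᵥ g))) = g := by
  have hunit := (posDef_smul_gram_add_one (L := L) ht).isUnit
  have hinv : (t • (Lᵀ * L) + 1) * smoother L t = 1 :=
    mul_nonsing_inv _ ((isUnit_iff_isUnit_det _).mp hunit)
  have := congrArg (· *ᵥ g) hinv
  simp only [← mulVec_mulVec, one_mulVec, add_mulVec, smul_mulVec] at this
  rw [add_comm]
  exact this

lemma splineEnergy_smoother_eq (ht : 0 ≤ t) (g : n → ℝ) :
    splineEnergy L t g (smoother L t *ᵥ g) = g ⬝ᵥ g - g ⬝ᵥ smoother L t *ᵥ g :=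
  splineEnergy_of_normal_eq (smoother_mulVec_add ht g)

lemma splineEnergy_smoother_add_le (ht : 0 ≤ t) (g u : n → ℝ) :
    splineEnergy L t g (smoother L t *ᵥ g) + normSq (u - smoother L t *ᵥ g)
      ≤ splineEnergy L t g u := by
  rw [splineEnergy_eq_add_of_normal_eq (smoother_mulVec_add ht g) u]
  have := mul_nonneg ht (normSq_nonneg (L *ᵥ (u - smoother L t *ᵥ g)))
  linarith

lemma splineEnergy_smoother_le (ht : 0 ≤ t) {C : ℝ} (hL : ∀ x, normSq (L *ᵥ x) ≤ C * normSq x)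
    (g : n → ℝ) : splineEnergy L t g (smoother L t *ᵥ g) ≤ t * C * normSq g :=
  calc splineEnergy L t g (smoother L t *ᵥ g)
      ≤ splineEnergy L t g g := by
        linarith [splineEnergy_smoother_add_le (L := L) ht g g,
          normSq_nonneg (g - smoother L t *ᵥ g)]
    _ = t * normSq (L *ᵥ g) := by simp [splineEnergy, normSq]
    _ ≤ t * C * normSq g := by
        rw [mul_assoc]
        exact mul_le_mul_of_nonneg_left (hL g) ht

lemma splineEnergy_smoother_sub_sub_le {m' : Type*} [Fintype m'] {L' : Matrix m' n ℝ}
    (ht : 0 ≤ t) {C : ℝ} (hL : ∀ x, normSq (L *ᵥ x) ≤ C * normSq x)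
    (hL' : ∀ x, normSq (L' *ᵥ x) ≤ C * normSq x) (f g : n → ℝ) :
    (splineEnergy L t g (smoother L t *ᵥ g) - splineEnergy L' t g (smoother L' t *ᵥ g))
      - (splineEnergy L t f (smoother L t *ᵥ f) - splineEnergy L' t f (smoother L' t *ᵥ f))
      ≤ t * C * √(normSq (g - f)) * √(normSq (g + f)) := by
  set D := smoother L' t - smoother L t
  have hD : D.IsSymm := smoother_isSymm.sub smoother_isSymm
  have hquad : ∀ z, splineEnergy L t z (smoother L t *ᵥ z)
      - splineEnergy L' t z (smoother L' t *ᵥ z) = z ⬝ᵥ D *ᵥ z := by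
    intro z
    rw [splineEnergy_smoother_eq ht, splineEnergy_smoother_eq ht, sub_mulVec, dotProduct_sub]
    ring
  have hbound : ∀ z, |z ⬝ᵥ D *ᵥ z| ≤ t * C * normSq z := by
    intro z
    rw [← hquad, abs_sub_le_iff]
    constructor <;> linarith [splineEnergy_smoother_le ht hL z, splineEnergy_smoother_le ht hL' z,
      splineEnergy_nonneg (L := L) ht z (smoother L t *ᵥ z),
      splineEnergy_nonneg (L := L') ht z (smoother L' t *ᵥ z)]
  rw [hquad, hquad, hD.quadratic_sub_quadratic]
  exact hD.dotProduct_mulVec_le hbound _ _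

end SmoothingSpline

lemma sum_comp_le_sum_of_injective {ι κ : Type*} [Fintype ι] [Fintype κ] {φ : ι → κ}
    (hφ : Function.Injective φ) {F : κ → ℝ} (hF : 0 ≤ F) : ∑ i, F (φ i) ≤ ∑ j, F j := by
  calc ∑ i, F (φ i) = ∑ j ∈ univ.map ⟨φ, hφ⟩, F j := by rw [Finset.sum_map]; rfl
    _ ≤ ∑ j, F j := Finset.sum_le_univ_sum_of_nonneg hF

lemma Fin.val_add_val_lt {q k : ℕ} (i : Fin (q - k)) (j : Fin (k + 1)) : (i : ℕ) + j < q := by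
  have := i.isLt
  have := j.isLt
  omega

lemma sum_choose_fin (k : ℕ) : ∑ j : Fin (k + 1), (k.choose j : ℝ) = 2 ^ k := by
  rw [Fin.sum_univ_eq_sum_range (fun j => (k.choose j : ℝ)), ← Nat.cast_sum, Nat.sum_range_choose]
  norm_num

namespace IPart

variable {N : ℕ} (P : IPart N) (k : ℕ)

lemma L_mulVec (x : Fin N → ℝ) (m : Fin P.M) (i : Fin (P.len m - k)) :
    (P.L k *ᵥ x) ⟨m, i⟩ = ∑ j : Fin (k + 1), (-1 : ℝ) ^ (k - j.val) * (k.choose j : ℝ) *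
      P.restrict x m ⟨i.val + j.val, i.val_add_val_lt j⟩ := by
  simp only [mulVec, dotProduct, L, of_apply, Finset.sum_mul]
  rw [Finset.sum_comm, ← Fin.sum_univ_eq_sum_range]
  refine Finset.sum_congr rfl fun j _ => ?_
  rw [Finset.sum_eq_single ⟨_, P.idx_lt m ⟨i.val + j.val, i.val_add_val_lt j⟩⟩]
  · simp [restrict, Nat.add_assoc]
  · intro c _ hc
    rw [if_neg fun h => hc (Fin.ext (by simp [h, Nat.add_assoc])), zero_mul]
  · simp

lemma sum_diffEnergy_eq (u : Fin N → ℝ) :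
    ∑ m : Fin P.M, diffEnergy k (P.len m) (P.restrict u m) = normSq (P.L k *ᵥ u) := by
  simp only [normSq, Fintype.sum_sigma, L_mulVec, diffEnergy]

lemma eq_of_b_castSucc_add_eq {m m' : Fin P.M} {i i' : ℕ} (hi : i < P.len m)
    (hi' : i' < P.len m') (h : P.b m.castSucc + i = P.b m'.castSucc + i') : m = m' := by
  have hlt : ∀ {m m' : Fin P.M} {i i' : ℕ}, i < P.len m → m < m' →
      P.b m.castSucc + i < P.b m'.castSucc + i' := by
    intro m m' i i' hi hmm'
    have := P.mono.monotone (Fin.succ_le_castSucc_iff.mpr hmm')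
    unfold len at hi
    omega
  rcases lt_trichotomy m m' with hmm' | hmm' | hmm'
  · exact absurd h (hlt hi hmm').ne
  · exact hmm'
  · exact absurd h.symm (hlt hi' hmm').ne

lemma sum_sq_restrict_shift_le (x : Fin N → ℝ) (j : Fin (k + 1)) :
    ∑ r : P.RowIdx k,
        P.restrict x r.1 ⟨r.2.val + j.val, r.2.val_add_val_lt j⟩ ^ 2
      ≤ normSq x := by
  refine sum_comp_le_sum_of_injective (F := fun c => x c ^ 2) ?_ fun c => sq_nonneg (x c)
  rintro ⟨m, i⟩ ⟨m', i'⟩ h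
  have h' : P.b m.castSucc + (i.val + j.val) = P.b m'.castSucc + (i'.val + j.val) :=
    congrArg Fin.val h
  obtain rfl := P.eq_of_b_castSucc_add_eq (by omega) (by omega) h'
  have : i = i' := Fin.ext (by omega)
  subst this
  rfl

lemma normSq_L_mulVec_le (x : Fin N → ℝ) : normSq (P.L k *ᵥ x) ≤ 4 ^ k * normSq x := by
  set y : P.RowIdx k → Fin (k + 1) → ℝ := fun r j =>
    P.restrict x r.1 ⟨r.2.val + j.val, r.2.val_add_val_lt j⟩
  have hrow : ∀ r,
      (P.L k *ᵥ x) r ^ 2 ≤ 2 ^ k * ∑ j : Fin (k + 1), (k.choose j : ℝ) * y r j ^ 2 := by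
    rintro ⟨m, i⟩
    rw [L_mulVec, ← sum_choose_fin k]
    refine Finset.sum_sq_le_sum_mul_sum_of_sq_le_mul _ (fun j _ => by positivity)
      (fun j _ => by positivity) fun j _ => le_of_eq ?_
    rw [mul_pow, mul_pow, ← pow_mul, mul_comm _ 2, pow_mul, neg_one_sq, one_pow]
    ring
  calc normSq (P.L k *ᵥ x)
      ≤ ∑ r, 2 ^ k * ∑ j : Fin (k + 1), (k.choose j : ℝ) * y r j ^ 2 :=
        Finset.sum_le_sum fun r _ => hrow r
    _ = 2 ^ k * ∑ j : Fin (k + 1), (k.choose j : ℝ) * ∑ r, y r j ^ 2 := by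
        rw [← Finset.mul_sum, Finset.sum_comm]
        simp only [Finset.mul_sum]
    _ ≤ 2 ^ k * ∑ j : Fin (k + 1), (k.choose j : ℝ) * normSq x := by
        gcongr with j
        exact P.sum_sq_restrict_shift_le k x j
    _ = 4 ^ k * normSq x := by
        rw [← Finset.sum_mul, sum_choose_fin, ← mul_assoc, ← mul_pow]
        norm_num

noncomputable def longBlocks : Finset (ℕ × ℕ) :=
  (univ.filter fun m => k < P.len m).image fun m => (P.b m.castSucc, P.b m.succ)

lemma equivk_iff_longBlocks_eq {P Q : IPart N} :
    equivk k P Q ↔ P.longBlocks k = Q.longBlocks k := by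
  have hset : ∀ R : IPart N, (R.longBlocks k : Set (ℕ × ℕ))
      = {p | ∃ m, p = (R.b m.castSucc, R.b m.succ) ∧ k < R.len m} := fun R => by
    ext p
    simp [longBlocks, eq_comm, and_comm]
  rw [← Finset.coe_inj, hset, hset]
  rfl

lemma sum_eq_sum_longBlocks {F : ℕ × ℕ → ℝ}
    (hF : ∀ p : ℕ × ℕ, p.2 - p.1 ≤ k → F p = 0) :
    ∑ m : Fin P.M, F (P.b m.castSucc, P.b m.succ) = ∑ p ∈ P.longBlocks k, F p := by
  have hinj : Function.Injective fun m : Fin P.M => (P.b m.castSucc, P.b m.succ) :=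
    fun m m' h => Fin.castSucc_injective _ (P.mono.injective (congrArg Prod.fst h))
  rw [longBlocks, Finset.sum_image fun m _ m' _ h => hinj h, Finset.sum_filter]
  refine Finset.sum_congr rfl fun m _ => ?_
  split_ifs with h
  · rfl
  · exact hF (P.b m.castSucc, P.b m.succ) (not_lt.mp h)

-- Row `⟨m, i⟩` of `P.L k` is definitionally `diffRow k (P.b m.castSucc + i)`.
noncomputable def diffRow (s c : ℕ) : ℝ :=
  ∑ t ∈ range (k + 1), if c = s + t then (-1 : ℝ) ^ (k - t) * (k.choose t : ℝ) else 0

lemma gram_eq_of_equivk {P Q : IPart N} (h : equivk k P Q) :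
    (P.L k)ᵀ * P.L k = (Q.L k)ᵀ * Q.L k := by
  ext a c
  let F : ℕ × ℕ → ℝ := fun p =>
    ∑ i ∈ range (p.2 - p.1 - k), diffRow k (p.1 + i) a * diffRow k (p.1 + i) c
  have hF : ∀ p : ℕ × ℕ, p.2 - p.1 ≤ k → F p = 0 := fun p hp => by
    simp [F, Nat.sub_eq_zero_of_le hp]
  have hgram : ∀ R : IPart N,
      ((R.L k)ᵀ * R.L k) a c = ∑ m : Fin R.M, F (R.b m.castSucc, R.b m.succ) := fun R => by
    simp only [mul_apply, transpose_apply, Fintype.sum_sigma]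
    exact Finset.sum_congr rfl fun m _ => Fin.sum_univ_eq_sum_range
      (fun i => diffRow k (R.b m.castSucc + i) a * diffRow k (R.b m.castSucc + i) c) _
  rw [hgram, hgram, P.sum_eq_sum_longBlocks k hF, Q.sum_eq_sum_longBlocks k hF,
    (equivk_iff_longBlocks_eq k).mp h]

end IPart

section MumfordShah

variable {N k : ℕ} {β γ : ℝ}

lemma equivk_symm {P Q : IPart N} (h : equivk k P Q) : equivk k Q P := h.symm

lemma equivk_trans {P Q R : IPart N} (h₁ : equivk k P Q) (h₂ : equivk k Q R) :
    equivk k P R := h₁.trans h₂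

lemma classCard_le (P : IPart N) : classCard k P ≤ P.M :=
  Nat.sInf_le (⟨P, rfl, rfl⟩ : ∃ Q : IPart N, equivk k Q P ∧ Q.M = P.M)

lemma exists_equivk_M_eq_classCard (P : IPart N) :
    ∃ Q : IPart N, equivk k Q P ∧ Q.M = classCard k P :=
  Nat.sInf_mem (⟨P.M, P, rfl, rfl⟩ : {M' | ∃ Q : IPart N, equivk k Q P ∧ Q.M = M'}.Nonempty)

lemma classCard_eq_of_equivk {P Q : IPart N} (h : equivk k P Q) :
    classCard k P = classCard k Q := by
  unfold classCard
  congr 1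
  ext M'
  exact exists_congr fun R =>
    and_congr_left' ⟨fun h' => equivk_trans h' h, fun h' => equivk_trans h' (equivk_symm h)⟩

lemma Smat_eq_of_equivk {P Q : IPart N} (h : equivk k P Q) : Smat P k β = Smat Q k β := by
  rw [Smat, Smat, IPart.gram_eq_of_equivk k h]

lemma Smat_eq_smoother (P : IPart N) : Smat P k β = smoother (P.L k) (β ^ (2 * k)) := rfl

lemma pow_two_mul_nonneg (β : ℝ) (k : ℕ) : 0 ≤ β ^ (2 * k) := (even_two_mul k).pow_nonneg β

lemma msF_eq (g u : Fin N → ℝ) (P : IPart N) :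
    msF k β γ g u P = splineEnergy (P.L k) (β ^ (2 * k)) g u + γ * P.M := by
  rw [msF, P.sum_diffEnergy_eq]
  rfl

lemma Gc_eq (g : Fin N → ℝ) (P : IPart N) :
    Gc k β γ g P = splineEnergy (P.L k) (β ^ (2 * k)) g (smoother (P.L k) (β ^ (2 * k)) *ᵥ g)
      + γ * classCard k P := by
  rw [Gc, splineEnergy, Smat_eq_smoother]
  ring

lemma Gc_eq_of_equivk {P Q : IPart N} (h : equivk k P Q) (g : Fin N → ℝ) :
    Gc k β γ g P = Gc k β γ g Q := by
  rw [Gc_eq, Gc_eq, splineEnergy_smoother_eq (pow_two_mul_nonneg β k),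
    splineEnergy_smoother_eq (pow_two_mul_nonneg β k), ← Smat_eq_smoother, ← Smat_eq_smoother,
    Smat_eq_of_equivk h, classCard_eq_of_equivk h]

lemma Gc_add_normSq_le_msF (hγ : 0 ≤ γ) (g u : Fin N → ℝ) (P : IPart N) :
    Gc k β γ g P + normSq (u - Smat P k β *ᵥ g) ≤ msF k β γ g u P := by
  rw [Gc_eq, msF_eq]
  have := splineEnergy_smoother_add_le (L := P.L k) (pow_two_mul_nonneg β k) g u
  have : (classCard k P : ℝ) ≤ P.M := Nat.cast_le.mpr (classCard_le P)
  have := mul_le_mul_of_nonneg_left this hγ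
  rw [Smat_eq_smoother]
  linarith

lemma Gc_sub_Gc_sub_le (P Q : IPart N) (f g : Fin N → ℝ) :
    (Gc k β γ g P - Gc k β γ g Q) - (Gc k β γ f P - Gc k β γ f Q)
      ≤ (2 * β) ^ (2 * k) * √(normSq (g - f)) * √(normSq (g + f)) := by
  have h := splineEnergy_smoother_sub_sub_le (pow_two_mul_nonneg β k) (P.normSq_L_mulVec_le k)
    (Q.normSq_L_mulVec_le k) f g
  have hc : β ^ (2 * k) * 4 ^ k = (2 * β) ^ (2 * k) := by
    rw [mul_pow, pow_mul 2, mul_comm]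
    norm_num
  simp only [Gc_eq]
  rw [← hc]
  linarith

theorem msF_unique_minimizer_of_Gc_lt (hγ : 0 ≤ γ) (g : Fin N → ℝ) (P' : IPart N)
    (hlt : ∀ Q : IPart N, ¬ equivk k Q P' → Gc k β γ g P' < Gc k β γ g Q) :
    ∃ u : Fin N → ℝ,
      (∃ P : IPart N, ∀ (w : Fin N → ℝ) (Q : IPart N), msF k β γ g u P ≤ msF k β γ g w Q) ∧
      ∀ (v : Fin N → ℝ) (Q : IPart N),
        (∀ (w : Fin N → ℝ) (R : IPart N), msF k β γ g v Q ≤ msF k β γ g w R) →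
        v = u ∧ equivk k Q P' := by
  obtain ⟨P₀, hP₀, hP₀M⟩ := exists_equivk_M_eq_classCard (k := k) P'
  set u := Smat P₀ k β *ᵥ g
  have hu : msF k β γ g u P₀ = Gc k β γ g P' := by
    rw [msF_eq, ← Gc_eq_of_equivk hP₀, Gc_eq, classCard_eq_of_equivk hP₀, ← hP₀M]
    rfl
  have hle : ∀ Q, Gc k β γ g P' ≤ Gc k β γ g Q := fun Q => by
    by_cases hQ : equivk k Q P'
    · exact (Gc_eq_of_equivk hQ g).ge
    · exact (hlt Q hQ).le
  have hlow : ∀ w Q, Gc k β γ g Q + normSq (w - Smat Q k β *ᵥ g) ≤ msF k β γ g w Q :=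
    Gc_add_normSq_le_msF hγ g
  refine ⟨u, ⟨P₀, fun w Q => ?_⟩, fun v Q hv => ?_⟩
  · rw [hu]
    linarith [hle Q, hlow w Q, normSq_nonneg (w - Smat Q k β *ᵥ g)]
  · have hvQ := hlow v Q
    have hvu := hv u P₀
    rw [hu] at hvu
    have hQ : equivk k Q P' := by
      by_contra hQ
      linarith [hlt Q hQ, normSq_nonneg (v - Smat Q k β *ᵥ g)]
    have hv0 : normSq (v - Smat Q k β *ᵥ g) = 0 :=
      le_antisymm (by linarith [Gc_eq_of_equivk (β := β) (γ := γ) hQ g]) (normSq_nonneg _)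
    refine ⟨?_, hQ⟩
    rw [sub_eq_zero.mp (normSq_eq_zero.mp hv0),
      Smat_eq_of_equivk (equivk_trans hQ (equivk_symm hP₀))]

end MumfordShah

lemma mul_sqrt_normSq_lt_of_lt_min {n : Type*} [Fintype n] {c ε : ℝ} {f g : n → ℝ}
    (hc : 0 ≤ c)
    (h : √(normSq (g - f)) < min (ε / (2 * c * (√(normSq f) + 1 / 2))) (1 / 2)) :
    c * √(normSq (g - f)) * √(normSq (g + f)) < ε := by
  obtain ⟨hδ, hhalf⟩ := lt_min_iff.mp h
  have ha := Real.sqrt_nonneg (normSq (g - f))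
  have hf := Real.sqrt_nonneg (normSq f)
  have hsum : √(normSq (g + f)) ≤ 2 * (√(normSq f) + 1 / 2) :=
    calc √(normSq (g + f)) = √(normSq ((g - f) + (f + f))) := by rw [sub_add_add_cancel]
      _ ≤ √(normSq (g - f)) + (√(normSq f) + √(normSq f)) :=
        (sqrt_normSq_add_le _ _).trans (add_le_add le_rfl (sqrt_normSq_add_le f f))
      _ ≤ 2 * (√(normSq f) + 1 / 2) := by linarith
  have hD : 0 < 2 * c * (√(normSq f) + 1 / 2) := by
    rcases (by positivity : 0 ≤ 2 * c * (√(normSq f) + 1 / 2)).eq_or_lt with h0 | h0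
    · rw [← h0, div_zero] at hδ
      linarith
    · exact h0
  calc c * √(normSq (g - f)) * √(normSq (g + f))
      ≤ c * √(normSq (g - f)) * (2 * (√(normSq f) + 1 / 2)) :=
        mul_le_mul_of_nonneg_left hsum (by positivity)
    _ = √(normSq (g - f)) * (2 * c * (√(normSq f) + 1 / 2)) := by ring
    _ < ε := (lt_div_iff₀ hD).mp hδ

theorem stability_of_minimizer_general (N k : ℕ) (β γ : ℝ) (hγ : 0 < γ)
    (f : Fin N → ℝ) (ε : ℝ) (P' : IPart N)
    (hsep : ∀ P : IPart N, ¬ equivk k P P' →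
      Gc k β γ f P' < Gc k β γ f P - ε) :
    ∀ g : Fin N → ℝ,
      Real.sqrt (∑ i, (g i - f i) ^ 2)
        < min (ε / (2 * (2 * β) ^ (2 * k) * (Real.sqrt (∑ i, f i ^ 2) + 1 / 2)))
            (1 / 2) →
      ∃ u : Fin N → ℝ,
        (∃ P : IPart N, ∀ (w : Fin N → ℝ) (Q : IPart N),
          msF k β γ g u P ≤ msF k β γ g w Q) ∧
        ∀ (v : Fin N → ℝ) (Q : IPart N),
          (∀ (w : Fin N → ℝ) (R : IPart N), msF k β γ g v Q ≤ msF k β γ g w R) →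
          v = u ∧ equivk k Q P' := by
  intro g hg
  refine msF_unique_minimizer_of_Gc_lt hγ.le g P' fun Q hQ => ?_
  have hsmall : (2 * β) ^ (2 * k) * √(normSq (g - f)) * √(normSq (g + f)) < ε :=
    mul_sqrt_normSq_lt_of_lt_min (pow_two_mul_nonneg (2 * β) k) hg
  linarith [hsep Q hQ, Gc_sub_Gc_sub_le (k := k) (β := β) (γ := γ) P' Q f g]

/-- if for data `f` there are `𝓘'` and `ε > 0` with
`𝓖_{𝓘'}(f) < 𝓖_𝓘(f) - ε` for all `𝓘` not equivalent to `𝓘'`, then with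
`δ = min(ε / (2(2β)^{2k}(‖f‖ + 1/2)), 1/2)`, for every `g` with `‖g - f‖ < δ`
the higher order Mumford-Shah problem for data `g` has a unique minimizer and
every optimal partition for `g` is equivalent to `𝓘'`. -/
theorem stability_of_minimizer (N k : ℕ) (β γ : ℝ) (hβ : 0 < β) (hγ : 0 < γ)
    (f : Fin N → ℝ) (ε : ℝ) (hε : 0 < ε) (P' : IPart N)
    (hsep : ∀ P : IPart N, ¬ equivk k P P' →
      Gc k β γ f P' < Gc k β γ f P - ε) :
    ∀ g : Fin N → ℝ,
      Real.sqrt (∑ i, (g i - f i) ^ 2)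
        < min (ε / (2 * (2 * β) ^ (2 * k) * (Real.sqrt (∑ i, f i ^ 2) + 1 / 2)))
            (1 / 2) →
      ∃ u : Fin N → ℝ,
        (∃ P : IPart N, ∀ (w : Fin N → ℝ) (Q : IPart N),
          msF k β γ g u P ≤ msF k β γ g w Q) ∧
        ∀ (v : Fin N → ℝ) (Q : IPart N),
          (∀ (w : Fin N → ℝ) (R : IPart N), msF k β γ g v Q ≤ msF k β γ g w R) →
          v = u ∧ equivk k Q P' :=
  stability_of_minimizer_general N k β γ hγ f ε P' hsep
end

section
/- For data f = (0,1,0), order k = 2, and any 0 < γ < 2/3, choosing β with β⁴ = γ/(4 - 6γ) makes the second order Mumford-Shah functional have (at least) two distinct minimizers: u² = (0,1,0) with a two-segment partition (value γ) and u¹ = (2β⁴, 1+2β⁴, 2β⁴)/(1+6β⁴) with the one-segment partition (value 4β⁴/(1+6β⁴) = γ and u¹ ≠ u²). -/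
/-!
Segments of length at most two carry no second differences, so any partition into at least two
segments costs at least `γ`, and the two-segment partition attains `γ` with `u = f`. On the
one-segment partition the functional is a positive definite quadratic in `u`; expanding it around
the solution of its normal equations shows that its minimum is `4β⁴/(1+6β⁴)`, which the choice of
`β` makes equal to `γ`.
-/

open Finset Matrix

/-- The second order (k = 2) Mumford-Shah functional on `ℝ³`, normalized by the
number of jumps: `(u,𝓘) ↦ ‖u - f‖₂² + β⁴ Σ_{I∈𝓘}‖∇² u_I‖₂² + γ(|𝓘| - 1)`. -/
noncomputable def msF2 (β γ : ℝ) (f u : Fin 3 → ℝ) (P : IPart 3) : ℝ :=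
  (∑ i, (u i - f i) ^ 2)
    + β ^ 4 * ∑ m : Fin P.M, diffEnergy 2 (P.len m) (P.restrict u m)
    + γ * ((P.M - 1 : ℕ) : ℝ)

/-- The one-segment partition `{(1,2,3)}` of `{1,2,3}`. -/
def Q1 : IPart 3 := ⟨1, ![0, 3], by decide, by decide, by decide⟩

/-- A two-segment partition `{(1),(2,3)}` of `{1,2,3}`. -/
def Q2 : IPart 3 := ⟨2, ![0, 1, 3], by decide, by decide, by decide⟩

lemma diffEnergy_nonneg (k q : ℕ) (v : Fin q → ℝ) : 0 ≤ diffEnergy k q v :=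
  sum_nonneg fun _ _ => sq_nonneg _

lemma diffEnergy_of_le {k q : ℕ} (h : q ≤ k) (v : Fin q → ℝ) : diffEnergy k q v = 0 := by
  have : IsEmpty (Fin (q - k)) := by rw [Nat.sub_eq_zero_of_le h]; infer_instance
  simp [diffEnergy]

lemma diffEnergy_two_three (v : Fin 3 → ℝ) :
    diffEnergy 2 3 v = (v 0 - 2 * v 1 + v 2) ^ 2 := by
  simp [diffEnergy, Fin.sum_univ_three, ← sub_eq_add_neg]

lemma IPart.M_ne_zero {N : ℕ} (P : IPart N) (hN : N ≠ 0) : P.M ≠ 0 := by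
  obtain ⟨M, b, -, first, last⟩ := P
  rintro rfl
  exact hN (last.symm.trans first)

lemma IPart.eq_Q1_of_M_eq_one (P : IPart 3) (h : P.M = 1) : P = Q1 := by
  obtain ⟨M, b, mono, first, last⟩ := P
  subst h
  obtain rfl : b = ![0, 3] := by
    funext i
    fin_cases i
    exacts [first, last]
  rfl

lemma msF2_Q1 (β γ : ℝ) (f w : Fin 3 → ℝ) :
    msF2 β γ f w Q1 = ∑ i, (w i - f i) ^ 2 + β ^ 4 * (w 0 - 2 * w 1 + w 2) ^ 2 := by
  have hsegment : ∑ m : Fin Q1.M, diffEnergy 2 (Q1.len m) (Q1.restrict w m)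
      = (w 0 - 2 * w 1 + w 2) ^ 2 :=
    (Fin.sum_univ_one _).trans (diffEnergy_two_three _)
  rw [msF2, hsegment]
  simp [Q1]

lemma msF2_Q2 (β γ : ℝ) (f w : Fin 3 → ℝ) :
    msF2 β γ f w Q2 = ∑ i, (w i - f i) ^ 2 + γ := by
  have hsegments : ∑ m : Fin Q2.M, diffEnergy 2 (Q2.len m) (Q2.restrict w m) = 0 :=
    sum_eq_zero fun m _ => diffEnergy_of_le (by fin_cases m <;> decide) _
  rw [msF2, hsegments]
  norm_num [Q2]

lemma le_msF2_of_two_le_M (β : ℝ) {γ : ℝ} (hγ : 0 ≤ γ) (f w : Fin 3 → ℝ) {P : IPart 3}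
    (hP : 2 ≤ P.M) : γ ≤ msF2 β γ f w P := by
  have hdata : 0 ≤ ∑ i, (w i - f i) ^ 2 := sum_nonneg fun _ _ => sq_nonneg _
  have henergy : 0 ≤ β ^ 4 * ∑ m : Fin P.M, diffEnergy 2 (P.len m) (P.restrict w m) :=
    mul_nonneg (by positivity) (sum_nonneg fun _ _ => diffEnergy_nonneg _ _ _)
  have hjumps : γ ≤ γ * ((P.M - 1 : ℕ) : ℝ) :=
    le_mul_of_one_le_right hγ (by exact_mod_cast (by omega : 1 ≤ P.M - 1))
  unfold msF2
  linarith

/-- The solution of the normal equations `(I + a DᵀD) u = (0, 1, 0)` with `D = (1, -2, 1)`. -/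
noncomputable def oneSegmentFit (a : ℝ) : Fin 3 → ℝ :=
  fun i => ![2 * a, 1 + 2 * a, 2 * a] i / (1 + 6 * a)

lemma oneSegmentFit_ne {a : ℝ} (ha : 0 < a) : oneSegmentFit a ≠ ![0, 1, 0] := by
  intro h
  have h0 := congrFun h 0
  simp only [oneSegmentFit, Matrix.cons_val_zero] at h0
  rw [div_eq_zero_iff] at h0
  rcases h0 with h0 | h0 <;> linarith

lemma msF2_Q1_eq (β γ : ℝ) (w : Fin 3 → ℝ) :
    let u := oneSegmentFit (β ^ 4)
    msF2 β γ ![0, 1, 0] w Q1 = 4 * β ^ 4 / (1 + 6 * β ^ 4) + ∑ i, (w i - u i) ^ 2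
      + β ^ 4 * ((w 0 - u 0) - 2 * (w 1 - u 1) + (w 2 - u 2)) ^ 2 := by
  have : 1 + 6 * β ^ 4 ≠ 0 := by positivity
  simp only [msF2_Q1, Fin.sum_univ_three, oneSegmentFit, cons_val_zero, cons_val_one,
    Matrix.cons_val, sub_zero]
  field_simp
  ring

lemma msF2_Q1_oneSegmentFit (β γ : ℝ) :
    msF2 β γ ![0, 1, 0] (oneSegmentFit (β ^ 4)) Q1 = 4 * β ^ 4 / (1 + 6 * β ^ 4) := by
  simp [msF2_Q1_eq]

lemma le_msF2_Q1 (β γ : ℝ) (w : Fin 3 → ℝ) :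
    4 * β ^ 4 / (1 + 6 * β ^ 4) ≤ msF2 β γ ![0, 1, 0] w Q1 := by
  rw [msF2_Q1_eq]
  have : 0 ≤ ∑ i, (w i - oneSegmentFit (β ^ 4) i) ^ 2 := sum_nonneg fun _ _ => sq_nonneg _
  exact le_add_of_le_of_nonneg (le_add_of_nonneg_right this) (by positivity)

lemma le_msF2 (β : ℝ) {γ : ℝ} (hγ : 0 ≤ γ) (w : Fin 3 → ℝ) (P : IPart 3) :
    min γ (4 * β ^ 4 / (1 + 6 * β ^ 4)) ≤ msF2 β γ ![0, 1, 0] w P := by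
  obtain hM | hM | hM : P.M = 0 ∨ P.M = 1 ∨ 2 ≤ P.M := by omega
  · exact absurd hM (P.M_ne_zero three_ne_zero)
  · rw [P.eq_Q1_of_M_eq_one hM]
    exact min_le_of_right_le (le_msF2_Q1 β γ w)
  · exact min_le_of_left_le (le_msF2_of_two_le_M β hγ _ w hM)

theorem non_uniqueness_example_general (γ : ℝ) (hγ0 : 0 < γ) (hγ1 : γ < 2 / 3)
    (β : ℝ) (hβ4 : β ^ 4 = γ / (4 - 6 * γ)) :
    let f : Fin 3 → ℝ := ![0, 1, 0]
    let u1 : Fin 3 → ℝ :=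
      fun i => ![2 * β ^ 4, 1 + 2 * β ^ 4, 2 * β ^ 4] i / (1 + 6 * β ^ 4)
    let u2 : Fin 3 → ℝ := ![0, 1, 0]
    u1 ≠ u2 ∧
    (∀ (w : Fin 3 → ℝ) (Q : IPart 3), msF2 β γ f u1 Q1 ≤ msF2 β γ f w Q) ∧
    (∀ (w : Fin 3 → ℝ) (Q : IPart 3), msF2 β γ f u2 Q2 ≤ msF2 β γ f w Q) ∧
    msF2 β γ f u1 Q1 = γ ∧ msF2 β γ f u2 Q2 = γ ∧
    4 * β ^ 4 / (1 + 6 * β ^ 4) = γ := by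
  intro f u1 u2
  have h46 : 0 < 4 - 6 * γ := by linarith
  have hβ4_pos : 0 < β ^ 4 := hβ4 ▸ div_pos hγ0 h46
  have hbalance : 4 * β ^ 4 / (1 + 6 * β ^ 4) = γ := by
    have hβ4_mul : β ^ 4 * (4 - 6 * γ) = γ := by rw [hβ4]; exact div_mul_cancel₀ γ h46.ne'
    rw [div_eq_iff (by positivity)]
    linear_combination hβ4_mul
  have hu1 : msF2 β γ f u1 Q1 = γ := (msF2_Q1_oneSegmentFit β γ).trans hbalance
  have hu2 : msF2 β γ f u2 Q2 = γ := by simp [u2, f, msF2_Q2]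
  have hmin : ∀ w Q, γ ≤ msF2 β γ f w Q := fun w Q => by
    simpa [hbalance] using le_msF2 β hγ0.le w Q
  exact ⟨oneSegmentFit_ne hβ4_pos, fun w Q => hu1.le.trans (hmin w Q),
    fun w Q => hu2.le.trans (hmin w Q),
    hu1, hu2, hbalance⟩

/-- for `f = (0,1,0)`, `k = 2`, any `0 < γ < 2/3`, and `β > 0` with
`β⁴ = γ/(4 - 6γ)`, the second order Mumford-Shah functional has (at least) two
distinct minimizers: `u² = (0,1,0)` with a two-segment partition (value `γ`) and
`u¹ = (2β⁴, 1+2β⁴, 2β⁴)/(1+6β⁴)` with the one-segment partition (value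
`4β⁴/(1+6β⁴) = γ`), and `u¹ ≠ u²`. -/
theorem non_uniqueness_example (γ : ℝ) (hγ0 : 0 < γ) (hγ1 : γ < 2 / 3)
    (β : ℝ) (hβ : 0 < β) (hβ4 : β ^ 4 = γ / (4 - 6 * γ)) :
    let f : Fin 3 → ℝ := ![0, 1, 0]
    let u1 : Fin 3 → ℝ :=
      fun i => ![2 * β ^ 4, 1 + 2 * β ^ 4, 2 * β ^ 4] i / (1 + 6 * β ^ 4)
    let u2 : Fin 3 → ℝ := ![0, 1, 0]
    u1 ≠ u2 ∧
    (∀ (w : Fin 3 → ℝ) (Q : IPart 3), msF2 β γ f u1 Q1 ≤ msF2 β γ f w Q) ∧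
    (∀ (w : Fin 3 → ℝ) (Q : IPart 3), msF2 β γ f u2 Q2 ≤ msF2 β γ f w Q) ∧
    msF2 β γ f u1 Q1 = γ ∧ msF2 β γ f u2 Q2 = γ ∧
    4 * β ^ 4 / (1 + 6 * β ^ 4) = γ :=
  non_uniqueness_example_general γ hγ0 hγ1 β hβ4
end
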